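/- Let X be a ℂ^n-valued random vector with covariance matrix Σ, and let H = V diag(h(λ_1),…,h(λ_n)) V^H be a graph filter where Σ = V diag(p_1,…,p_n) V^H is simultaneously diagonalizable with the graph shift operator S = V Λ V^H. Then the filtered signal H X has covariance V diag(|h(λ_1)|² p_1,…,|h(λ_n)|² p_n) V^H; in particular, H X is also weakly stationary with respect to S, with graph power spectral density |h(λ_ℓ)|² p_ℓ. -/

import Mathlib

/-!
Covariance transforms congruently under a linear map: `Cov(A X, B Y) = A Cov(X, Y) Bᴴ`, by
sesquilinearity of the integral (square integrability makes every product integrable).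
With `A = B = H`, both `H` and `Σ` are images of diagonal matrices under conjugation by the
unitary `V`, which is a ⋆-algebra automorphism; so `H Σ Hᴴ` is the image of
`diag(h(λ)) diag(p) diag(h(λ))ᴴ = diag(|h(λ)|² p)`.
-/

open Matrix MeasureTheory

/-- Covariance-type matrix `E[(X - E X)(Y - E Y)ᴴ]` of two `ℂⁿ`-valued random vectors. -/
noncomputable def crossCov {Ω : Type*} [MeasurableSpace Ω] (μ : Measure Ω) {n : ℕ}
    (X Y : Ω → Fin n → ℂ) : Matrix (Fin n) (Fin n) ℂ :=
  Matrix.of fun k l =>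
    ∫ ω, (X ω k - ∫ ω', X ω' k ∂μ) * (starRingEnd ℂ) (Y ω l - ∫ ω', Y ω' l ∂μ) ∂μ

section crossCov

variable {Ω : Type*} [MeasurableSpace Ω] {μ : Measure Ω} {n : ℕ}

theorem crossCov_conjTranspose (X Y : Ω → Fin n → ℂ) :
    (crossCov μ X Y)ᴴ = crossCov μ Y X := by
  ext k l
  simp [crossCov, ← integral_conj, mul_comm]

variable {X Y : Ω → Fin n → ℂ}

theorem integral_mulVec_apply (A : Matrix (Fin n) (Fin n) ℂ)
    (hX : ∀ i, Integrable (fun ω => X ω i) μ) (k : Fin n) :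
    ∫ ω, (A *ᵥ X ω) k ∂μ = (A *ᵥ fun i => ∫ ω, X ω i ∂μ) k := by
  simp only [mulVec, dotProduct]
  rw [integral_finsetSum _ fun i _ => (hX i).const_mul _]
  simp only [integral_const_mul]

theorem memLp_mulVec_apply {p : ENNReal} (A : Matrix (Fin n) (Fin n) ℂ)
    (hX : ∀ i, MemLp (fun ω => X ω i) p μ) (k : Fin n) :
    MemLp (fun ω => (A *ᵥ X ω) k) p μ := by
  simp only [mulVec, dotProduct]
  exact memLp_finsetSum _ fun i _ => (hX i).const_mul _

variable [IsFiniteMeasure μ]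

theorem crossCov_mulVec_left (A : Matrix (Fin n) (Fin n) ℂ)
    (hX : ∀ k, MemLp (fun ω => X ω k) 2 μ) (hY : ∀ k, MemLp (fun ω => Y ω k) 2 μ) :
    crossCov μ (fun ω => A *ᵥ X ω) Y = A * crossCov μ X Y := by
  have hXc : ∀ i, MemLp (fun ω => X ω i - ∫ ω', X ω' i ∂μ) 2 μ :=
    fun i => (hX i).sub (memLp_const _)
  have hYc : ∀ l, MemLp (fun ω => (starRingEnd ℂ) (Y ω l - ∫ ω', Y ω' l ∂μ)) 2 μ :=
    fun l => ((hY l).sub (memLp_const _)).star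
  ext k l
  simp only [crossCov, of_apply, mul_apply,
    integral_mulVec_apply A fun i => (hX i).integrable one_le_two]
  simp only [mulVec, dotProduct, ← Finset.sum_sub_distrib, ← mul_sub, Finset.sum_mul,
    mul_assoc]
  rw [integral_finsetSum _ fun i _ => ?_]
  · simp only [integral_const_mul]
  · exact ((hXc i).integrable_mul (hYc l)).const_mul _

theorem crossCov_mulVec_right (B : Matrix (Fin n) (Fin n) ℂ)
    (hX : ∀ k, MemLp (fun ω => X ω k) 2 μ) (hY : ∀ k, MemLp (fun ω => Y ω k) 2 μ) :
    crossCov μ X (fun ω => B *ᵥ Y ω) = crossCov μ X Y * Bᴴ := by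
  rw [← crossCov_conjTranspose, crossCov_mulVec_left B hY hX, conjTranspose_mul,
    crossCov_conjTranspose]

theorem crossCov_mulVec_mulVec (A B : Matrix (Fin n) (Fin n) ℂ)
    (hX : ∀ k, MemLp (fun ω => X ω k) 2 μ) (hY : ∀ k, MemLp (fun ω => Y ω k) 2 μ) :
    crossCov μ (fun ω => A *ᵥ X ω) (fun ω => B *ᵥ Y ω) = A * crossCov μ X Y * Bᴴ := by
  rw [crossCov_mulVec_left A hX (memLp_mulVec_apply B hY), crossCov_mulVec_right B hX hY,
    Matrix.mul_assoc]

end crossCov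

theorem diagonal_mul_diagonal_mul_conjTranspose_diagonal {ι 𝕜 : Type*} [Fintype ι]
    [DecidableEq ι] [RCLike 𝕜] (d p : ι → 𝕜) :
    diagonal d * diagonal p * (diagonal d)ᴴ =
      diagonal fun i => ((‖d i‖ ^ 2 : ℝ) : 𝕜) * p i := by
  rw [diagonal_conjTranspose, diagonal_mul_diagonal, diagonal_mul_diagonal]
  congr 1
  ext i
  rw [Pi.star_apply, mul_right_comm, RCLike.star_def, RCLike.mul_conj, RCLike.ofReal_pow]

/-- If a random vector `X` has covariance `Σ = V diag(p₁,…,p_n) Vᴴ`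
(simultaneously diagonalizable with the shift `S = V Λ Vᴴ`), then the filtered signal `H X`,
with `H = V diag(h(λ₁),…,h(λ_n)) Vᴴ`, has covariance
`V diag(|h(λ₁)|² p₁, …, |h(λ_n)|² p_n) Vᴴ`; in particular it is again weakly stationary
with respect to `S`, with power spectral density `|h(λ_ℓ)|² p_ℓ`. -/
theorem stmt_14 {Ω : Type*} [MeasurableSpace Ω] (μ : Measure Ω) [IsProbabilityMeasure μ]
    {n : ℕ} (X : Ω → Fin n → ℂ)
    (hX : ∀ k, MemLp (fun ω => X ω k) 2 μ)
    (V : Matrix (Fin n) (Fin n) ℂ) (hV : V ∈ Matrix.unitaryGroup (Fin n) ℂ)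
    (lam : Fin n → ℂ) (psd : Fin n → ℂ)
    (hSig : crossCov μ X X = V * Matrix.diagonal psd * Vᴴ)
    (h : ℂ → ℂ) (H : Matrix (Fin n) (Fin n) ℂ)
    (hH : H = V * Matrix.diagonal (fun ℓ => h (lam ℓ)) * Vᴴ) :
    crossCov μ (fun ω => H.mulVec (X ω)) (fun ω => H.mulVec (X ω)) =
      V * Matrix.diagonal (fun ℓ => ((‖h (lam ℓ)‖ ^ 2 : ℝ) : ℂ) * psd ℓ) * Vᴴ := by
  let φ := Unitary.conjStarAlgAut ℂ _ ⟨V, hV⟩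
  have conj_V : ∀ D, V * D * Vᴴ = φ D := fun _ => rfl
  rw [crossCov_mulVec_mulVec H H hX hX, hSig, hH, conj_V, conj_V, conj_V,
    ← star_eq_conjTranspose, ← map_star, ← map_mul, ← map_mul, star_eq_conjTranspose,
    diagonal_mul_diagonal_mul_conjTranspose_diagonal]
  -- the casts `ℝ → ℂ` through `RCLike` and `Complex.ofReal` agree only up to unfolding
  rfl
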